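/- Let M be a loopless laminar matroid with canonical presentation (E, 𝒜, c), with |E| ≥ 2. Then the following are equivalent: (i) M is connected; (ii) E ∈ 𝒜; (iii) M has a spanning circuit. -/

import Mathlib

/-!
A circuit of `M(E, 𝒜, c)` is a minimal set overfilling some member `A ∈ 𝒜`, hence lies inside `A`.

(i) ⇒ (ii): by laminarity the members containing a fixed element `e` form a chain, and
connectivity forces its largest member to contain every other element, so it is `E`.

(ii) ⇒ (iii): essentiality of `E` gives a set with more than `c E` elements obeying all other
constraints; any `c E + 1` of them form a circuit `C`, and `C` minus a point is an independent set
of the maximal size `c E`, i.e. a base.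

(iii) ⇒ (i): in a loopless matroid every element of the closure of a circuit `C` shares a circuit
with some element of `C`, and sharing a circuit is transitive (strong circuit elimination, by
induction on `|C₁ \ C₂|`).
-/

open Set

variable {α : Type*}

/-- A circuit: a minimal dependent set. -/
def Matroid.IsCircuit' (M : Matroid α) (C : Set α) : Prop :=
  M.Dep C ∧ ∀ D, D ⊂ C → M.Indep D

/-- The circuit characterization of laminar matroids. -/
def Matroid.IsLaminar (M : Matroid α) : Prop :=
  ∀ C₁ C₂, M.IsCircuit' C₁ → M.IsCircuit' C₂ → (C₁ ∩ C₂).Nonempty →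
    M.closure C₁ ⊆ M.closure C₂ ∨ M.closure C₂ ⊆ M.closure C₁

/-- A laminar family: any two intersecting members are comparable. -/
def IsLaminarFamily (𝒜 : Set (Set α)) : Prop :=
  ∀ A ∈ 𝒜, ∀ B ∈ 𝒜, (A ∩ B).Nonempty → A ⊆ B ∨ B ⊆ A

/-- `M` is presented by the laminar family `𝒜` with capacities `c`. -/
def Matroid.IsLaminarPresBy (M : Matroid α) (E : Set α) (𝒜 : Set (Set α)) (c : Set α → ℕ) :
    Prop :=
  M.E = E ∧ ∀ I, M.Indep I ↔ I ⊆ E ∧ ∀ A ∈ 𝒜, (I ∩ A).ncard ≤ c A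

/-- `M` has some laminar presentation (on its own ground set); this captures being
isomorphic to a laminar matroid `M(E, 𝒜, c)`. -/
def Matroid.HasLaminarPres (M : Matroid α) : Prop :=
  ∃ (𝒜 : Set (Set α)) (c : Set α → ℕ), IsLaminarFamily 𝒜 ∧ (∀ A ∈ 𝒜, A ⊆ M.E) ∧
    M.IsLaminarPresBy M.E 𝒜 c

/-- `A` is essential in the presentation `(E, 𝒜, c)`: removing it changes the matroid. -/
def Essential (E : Set α) (𝒜 : Set (Set α)) (c : Set α → ℕ) (A : Set α) : Prop :=
  ∃ I ⊆ E, (∀ B ∈ 𝒜, B ≠ A → (I ∩ B).ncard ≤ c B) ∧ c A < (I ∩ A).ncard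

/-- A canonical presentation of a loopless laminar matroid: every member is essential. -/
def IsCanonical (E : Set α) (𝒜 : Set (Set α)) (c : Set α → ℕ) : Prop :=
  ∀ A ∈ 𝒜, Essential E 𝒜 c A

/-- A matroid is loopless if every singleton of the ground set is independent. -/
def Matroid.Loopless' (M : Matroid α) : Prop := ∀ e ∈ M.E, M.Indep {e}

/-- Connectivity: every pair of distinct elements lies in a common circuit. -/
def Matroid.IsConnected' (M : Matroid α) : Prop :=
  ∀ e ∈ M.E, ∀ f ∈ M.E, e ≠ f → ∃ C, M.IsCircuit' C ∧ e ∈ C ∧ f ∈ C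
namespace Matroid

variable {M : Matroid α} {C C₁ C₂ : Set α} {e f g x : α}

lemma isCircuit'_iff_isCircuit : M.IsCircuit' C ↔ M.IsCircuit C := by
  rw [isCircuit_iff_forall_ssubset]
  exact Iff.rfl

def InCommonCircuit (M : Matroid α) (e f : α) : Prop :=
  ∃ C, M.IsCircuit C ∧ e ∈ C ∧ f ∈ C

lemma InCommonCircuit.symm (h : M.InCommonCircuit e f) : M.InCommonCircuit f e :=
  let ⟨C, hC, he, hf⟩ := h
  ⟨C, hC, hf, he⟩

lemma IsCircuit.inCommonCircuit_of_mem_of_mem [M.Finitary] (hC₁ : M.IsCircuit C₁)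
    (hC₂ : M.IsCircuit C₂) (he : e ∈ C₁) (hf₁ : f ∈ C₁) (hf₂ : f ∈ C₂) (hg : g ∈ C₂) :
    M.InCommonCircuit e g := by
  induction hn : (C₁ \ C₂).ncard using Nat.strong_induction_on generalizing C₁ f with
  | _ n ih =>
  by_cases hg₁ : g ∈ C₁
  · exact ⟨C₁, hC₁, he, hg₁⟩
  by_cases he₂ : e ∈ C₂
  · exact ⟨C₂, hC₂, he₂, hg⟩
  obtain ⟨C₃, hC₃s, hC₃, hgC₃⟩ := hC₂.strong_elimination hC₁ hf₂ hf₁ hg hg₁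
  by_cases he₃ : e ∈ C₃
  · exact ⟨C₃, hC₃, he₃, hgC₃⟩
  obtain ⟨y, hy₃, hy₂⟩ := not_subset.1 fun h₃₂ ↦
    (hC₃s (hC₃.eq_of_subset_isCircuit hC₂ h₃₂ ▸ hf₂)).2 rfl
  have hy₁ : y ∈ C₁ := (hC₃s hy₃).1.resolve_left hy₂
  obtain ⟨C₄, hC₄s, hC₄, heC₄⟩ := hC₁.strong_elimination hC₃ hy₁ hy₃ he he₃
  have hC₄C₂ : (C₄ ∩ C₂).Nonempty := by
    refine not_disjoint_iff_nonempty_inter.1 fun hdisj ↦ (hC₄s ?_).2 rfl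
    refine hC₄.eq_of_subset_isCircuit hC₁ (fun w hw ↦ ?_) ▸ hy₁
    obtain hw₁ | hw₃ := (hC₄s hw).1
    · exact hw₁
    · exact (hC₃s hw₃).1.resolve_left (disjoint_left.1 hdisj hw)
  obtain ⟨z, hz₄, hz₂⟩ := hC₄C₂
  -- the measure drops since `y ∈ C₁ \ C₂` is not in `C₄`
  have hlt : (C₄ \ C₂).ncard < n := by
    rw [← hn]
    refine ncard_lt_ncard ⟨fun w ⟨hw₄, hw₂⟩ ↦ ⟨?_, hw₂⟩, fun h ↦ (hC₄s (h ⟨hy₁, hy₂⟩).1).2 rfl⟩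
      hC₁.finite.sdiff
    exact (hC₄s hw₄).1.elim id fun hw₃ ↦ (hC₃s hw₃).1.resolve_left hw₂
  exact ih _ hlt hC₄ heC₄ hz₄ hz₂ rfl

lemma InCommonCircuit.trans [M.Finitary] (h₁ : M.InCommonCircuit e f)
    (h₂ : M.InCommonCircuit f g) : M.InCommonCircuit e g :=
  let ⟨_, hC₁, he, hf₁⟩ := h₁
  let ⟨_, hC₂, hf₂, hg⟩ := h₂
  hC₁.inCommonCircuit_of_mem_of_mem hC₂ he hf₁ hf₂ hg

lemma IsCircuit.exists_inCommonCircuit_of_mem_closure (hC : M.IsCircuit C)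
    (hx : x ∈ M.closure C) (hxl : M.Indep {x}) : ∃ y ∈ C, M.InCommonCircuit x y := by
  by_cases hxC : x ∈ C
  · exact ⟨x, hxC, C, hC, hxC, hxC⟩
  obtain ⟨D, hDs, hD, hxD⟩ := M.exists_isCircuit_of_mem_closure hx hxC
  obtain ⟨y, hyD, hyx⟩ := not_subset.1 fun h ↦ hD.not_indep (hxl.subset h)
  exact ⟨y, (hDs hyD).resolve_left hyx, D, hD, hxD, hyD⟩

lemma isConnected'_of_isCircuit_closure_eq [M.Finitary] (hloop : M.Loopless')
    (hC : M.IsCircuit C) (hCE : M.closure C = M.E) : M.IsConnected' := by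
  intro e he f hf _
  obtain ⟨y, hy, hey⟩ := hC.exists_inCommonCircuit_of_mem_closure (hCE ▸ he) (hloop e he)
  obtain ⟨z, hz, hfz⟩ := hC.exists_inCommonCircuit_of_mem_closure (hCE ▸ hf) (hloop f hf)
  obtain ⟨D, hD, heD, hfD⟩ := (hey.trans ⟨C, hC, hy, hz⟩).trans hfz.symm
  exact ⟨D, isCircuit'_iff_isCircuit.2 hD, heD, hfD⟩

end Matroid

lemma IsLaminarFamily.exists_mem_superset {𝒜 : Set (Set α)} (h𝒜 : IsLaminarFamily 𝒜)
    (hfin : 𝒜.Finite) {X : Set α} {e : α} (hX : X.Nonempty)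
    (h : ∀ x ∈ X, ∃ A ∈ 𝒜, e ∈ A ∧ x ∈ A) : ∃ A ∈ 𝒜, e ∈ A ∧ X ⊆ A := by
  obtain ⟨A, hA⟩ : ∃ A, Maximal (fun A ↦ A ∈ 𝒜 ∧ e ∈ A) A := by
    obtain ⟨x, hx⟩ := hX
    obtain ⟨A, hA, heA, -⟩ := h x hx
    exact (hfin.subset fun _ ↦ And.left).exists_maximal ⟨A, hA, heA⟩
  refine ⟨A, hA.prop.1, hA.prop.2, fun x hx ↦ ?_⟩
  obtain ⟨B, hB, heB, hxB⟩ := h x hx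
  obtain hBA | hAB := h𝒜 B hB A hA.prop.1 ⟨e, heB, hA.prop.2⟩
  · exact hBA hxB
  · exact hA.le_of_ge ⟨hB, heB⟩ hAB hxB

namespace Matroid.IsLaminarPresBy

variable {E : Set α} {𝒜 : Set (Set α)} {c : Set α → ℕ} {M : Matroid α} {A C I : Set α}

lemma not_indep_of_lt_ncard (hM : M.IsLaminarPresBy E 𝒜 c) (hA : A ∈ 𝒜)
    (hI : c A < (I ∩ A).ncard) : ¬ M.Indep I :=
  fun hind ↦ (((hM.2 I).1 hind).2 A hA).not_gt hI

lemma exists_mem_subset_of_isCircuit (hM : M.IsLaminarPresBy E 𝒜 c) (hC : M.IsCircuit C) :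
    ∃ A ∈ 𝒜, C ⊆ A := by
  have hCE : C ⊆ E := hM.1 ▸ hC.subset_ground
  obtain ⟨A, hA, hlt⟩ : ∃ A ∈ 𝒜, c A < (C ∩ A).ncard := by
    by_contra! h
    exact hC.not_indep ((hM.2 C).2 ⟨hCE, h⟩)
  refine ⟨A, hA, fun x hx ↦ by_contra fun hxA ↦ ?_⟩
  refine hM.not_indep_of_lt_ncard hA ?_ (hC.sdiff_singleton_indep hx)
  rwa [← inter_sdiff_right_comm, sdiff_singleton_eq_self fun h ↦ hxA h.2]

lemma mem_of_isConnected' (hM : M.IsLaminarPresBy E 𝒜 c) (h𝒜 : IsLaminarFamily 𝒜)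
    (h𝒜E : ∀ A ∈ 𝒜, A ⊆ E) (hE : E.Finite) (hE2 : E.Nontrivial) (hconn : M.IsConnected') :
    E ∈ 𝒜 := by
  obtain ⟨e, he⟩ := hE2.nonempty
  obtain ⟨A, hA, heA, hXA⟩ := h𝒜.exists_mem_superset (X := E \ {e})
      (hE.finite_subsets.subset h𝒜E) (hE2.exists_ne e) fun x ⟨hxE, hxe⟩ ↦ by
      obtain ⟨C, hC, heC, hxC⟩ := hconn e (hM.1 ▸ he) x (hM.1 ▸ hxE) (Ne.symm hxe)
      obtain ⟨A, hA, hCA⟩ := hM.exists_mem_subset_of_isCircuit (isCircuit'_iff_isCircuit.1 hC)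
      exact ⟨A, hA, hCA heC, hCA hxC⟩
  have hEA : E ⊆ A := fun x hx ↦ by
    obtain rfl | hxe := eq_or_ne x e
    · exact heA
    · exact hXA ⟨hx, hxe⟩
  rwa [← (h𝒜E A hA).antisymm hEA]

lemma exists_isCircuit_closure_eq (hM : M.IsLaminarPresBy E 𝒜 c) (hE : E.Finite) (hEA : E ∈ 𝒜)
    (hess : Essential E 𝒜 c E) : ∃ C, M.IsCircuit C ∧ M.closure C = E := by
  obtain ⟨I, hIE, hIB, hIlt⟩ := hess
  rw [inter_eq_self_of_subset_left hIE] at hIlt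
  obtain ⟨C, hCI, hCcard⟩ := exists_subset_card_eq (show c E + 1 ≤ I.ncard from hIlt)
  have hCE : C ⊆ E := hCI.trans hIE
  have hC : M.IsCircuit C := by
    refine isCircuit_iff_forall_ssubset.2 ⟨⟨hM.not_indep_of_lt_ncard hEA ?_, hM.1 ▸ hCE⟩,
      fun D hDC ↦ (hM.2 D).2 ⟨hDC.subset.trans hCE, fun B hB ↦ ?_⟩⟩
    · rw [inter_eq_self_of_subset_left hCE]
      omega
    obtain rfl | hBE := eq_or_ne B E
    · have := ncard_lt_ncard hDC (hE.subset hCE)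
      rw [inter_eq_self_of_subset_left (hDC.subset.trans hCE)]
      omega
    · exact (ncard_le_ncard (inter_subset_inter_left _ (hDC.subset.trans hCI))
        ((hE.subset hIE).inter_of_left _)).trans (hIB B hB hBE)
  obtain ⟨y, hy⟩ := hC.nonempty
  have hbase : M.IsBase (C \ {y}) := by
    refine (hC.sdiff_singleton_indep hy).isBase_of_forall_insert fun x hx ↦
      hM.not_indep_of_lt_ncard hEA ?_
    have hxE : insert x (C \ {y}) ⊆ E := insert_subset (hM.1 ▸ hx.1) (sdiff_subset.trans hCE)
    rw [inter_eq_self_of_subset_left hxE, ncard_insert_of_notMem hx.2 (hE.subset hCE).sdiff,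
      ncard_sdiff_singleton_of_mem hy]
    omega
  exact ⟨C, hC, by rw [← hC.closure_sdiff_singleton_eq y, hbase.closure_eq, hM.1]⟩

end Matroid.IsLaminarPresBy

theorem stmt_17 (E : Set α) (hE : E.Finite) (hE2 : 2 ≤ E.ncard)
    (𝒜 : Set (Set α)) (h𝒜E : ∀ A ∈ 𝒜, A ⊆ E) (h𝒜 : IsLaminarFamily 𝒜)
    (c : Set α → ℕ) (M : Matroid α) (hM : M.IsLaminarPresBy E 𝒜 c)
    (hcanon : IsCanonical E 𝒜 c) (hloop : M.Loopless') :
    (M.IsConnected' ↔ E ∈ 𝒜) ∧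
      (E ∈ 𝒜 ↔ ∃ C, M.IsCircuit' C ∧ M.closure C = E) := by
  have : M.Finite := ⟨hM.1 ▸ hE⟩
  have hi_ii : M.IsConnected' → E ∈ 𝒜 :=
    hM.mem_of_isConnected' h𝒜 h𝒜E hE ((one_lt_ncard_iff_nontrivial_and_finite.1 hE2).1)
  have hii_iii (hEA : E ∈ 𝒜) : ∃ C, M.IsCircuit' C ∧ M.closure C = E := by
    obtain ⟨C, hC, hCE⟩ := hM.exists_isCircuit_closure_eq hE hEA (hcanon E hEA)
    exact ⟨C, Matroid.isCircuit'_iff_isCircuit.2 hC, hCE⟩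
  have hiii_i : (∃ C, M.IsCircuit' C ∧ M.closure C = E) → M.IsConnected' :=
    fun ⟨C, hC, hCE⟩ ↦ Matroid.isConnected'_of_isCircuit_closure_eq hloop
      (Matroid.isCircuit'_iff_isCircuit.1 hC) (hCE.trans hM.1.symm)
  exact ⟨⟨hi_ii, fun h ↦ hiii_i (hii_iii h)⟩, ⟨hii_iii, fun h ↦ hi_ii (hiii_i h)⟩⟩
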